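/- Let $A, B \in M_2(\mathbb{Z})$ be matrices all of whose entries lie in $\{0,1\}$. Then $A$ and $B$ generate $M_2(\mathbb{Z})$ as a ring if and only if their reductions modulo $2$ generate $M_2(\mathbb{F}_2)$ as an $\mathbb{F}_2$-algebra. -/

import Mathlib

/-!
Over any commutative ring, Cayley–Hamilton gives `X * X ∈ span {1, X}` for a `2 × 2` matrix `X`,
and its polarization gives `B * A ∈ span {1, A, B, A * B}`. Hence the subalgebra generated by `A`
and `B` is the submodule `span {1, A} * span {1, B} = span {1, A, B, A * B}`, which is everything
iff the determinant of these four matrices in coordinates is a unit; that determinant is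
`det (A * B - B * A)`. The criterion commutes with reduction mod `2`, and for matrices with entries
in `{0, 1}` an odd `det (A * B - B * A)` must be `±1`, which is a finite check.
-/

open Matrix Module Submodule
open scoped Pointwise

namespace Matrix

section CommRing

variable {R : Type*} [CommRing R]

theorem mul_self_fin_two (A : Matrix (Fin 2) (Fin 2) R) :
    A * A = A.trace • A - A.det • 1 := by
  ext i j
  fin_cases i <;> fin_cases j <;>
    simp [mul_apply, trace_fin_two, det_fin_two, Fin.sum_univ_two] <;> ring

-- Cayley–Hamilton for `A + B`, minus Cayley–Hamilton for `A` and for `B`.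
theorem mul_rev_fin_two (A B : Matrix (Fin 2) (Fin 2) R) :
    B * A = B.trace • A + A.trace • B + ((A * B).trace - A.trace * B.trace) • 1 - A * B := by
  ext i j
  fin_cases i <;> fin_cases j <;>
    simp [mul_apply, trace_fin_two, Fin.sum_univ_two] <;> ring

theorem span_one_self_mul_self_le (A : Matrix (Fin 2) (Fin 2) R) :
    span R {1, A} * span R {1, A} ≤ span R {1, A} := by
  rw [span_mul_span, span_le]
  rintro _ ⟨x, hx, y, hy, rfl⟩
  have h1 : (1 : Matrix (Fin 2) (Fin 2) R) ∈ span R {1, A} := subset_span (by simp)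
  have hA : A ∈ span R {1, A} := subset_span (by simp)
  simp only [Set.mem_insert_iff, Set.mem_singleton_iff] at hx hy
  rcases hx with hx | hx <;> rcases hy with hy | hy <;> rw [SetLike.mem_coe, hx, hy]
  · simpa using h1
  · simpa using hA
  · simpa using hA
  show A * A ∈ _
  rw [mul_self_fin_two]
  exact sub_mem (smul_mem _ _ hA) (smul_mem _ _ h1)

theorem span_one_mul_span_one (A B : Matrix (Fin 2) (Fin 2) R) :
    span R {1, A} * span R {1, B} = span R {1, A, B, A * B} := by
  rw [span_mul_span]
  congr 1
  ext
  simp only [Set.mem_mul, Set.mem_insert_iff, Set.mem_singleton_iff, exists_eq_or_imp,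
    exists_eq_left, one_mul, mul_one]
  tauto

theorem span_one_mul_span_one_le_swap (A B : Matrix (Fin 2) (Fin 2) R) :
    span R {1, B} * span R {1, A} ≤ span R {1, A} * span R {1, B} := by
  rw [span_mul_span, span_one_mul_span_one, span_le]
  rintro _ ⟨x, hx, y, hy, rfl⟩
  have h1 : (1 : Matrix (Fin 2) (Fin 2) R) ∈ span R {1, A, B, A * B} := subset_span (by simp)
  have hA : A ∈ span R {1, A, B, A * B} := subset_span (by simp)
  have hB : B ∈ span R {1, A, B, A * B} := subset_span (by simp)
  have hAB : A * B ∈ span R {1, A, B, A * B} := subset_span (by simp)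
  simp only [Set.mem_insert_iff, Set.mem_singleton_iff] at hx hy
  rcases hx with hx | hx <;> rcases hy with hy | hy <;> rw [SetLike.mem_coe, hx, hy]
  · simpa using h1
  · simpa using hA
  · simpa using hB
  show B * A ∈ _
  rw [mul_rev_fin_two A B]
  exact sub_mem (add_mem (add_mem (smul_mem _ _ hA) (smul_mem _ _ hB)) (smul_mem _ _ h1)) hAB

theorem toSubmodule_adjoin_pair (A B : Matrix (Fin 2) (Fin 2) R) :
    Subalgebra.toSubmodule (Algebra.adjoin R {A, B}) = span R {1, A} * span R {1, B} := by
  set SA := span R {1, A}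
  set SB := span R {1, B}
  have hA : A ∈ SA := subset_span (by simp)
  have hB : B ∈ SB := subset_span (by simp)
  have h1 : (1 : Matrix (Fin 2) (Fin 2) R) ∈ SA * SB :=
    mul_one (1 : Matrix (Fin 2) (Fin 2) R) ▸
      mul_mem_mul (subset_span (by simp)) (subset_span (by simp))
  have hmul : SA * SB * (SA * SB) ≤ SA * SB := calc
    SA * SB * (SA * SB) = SA * (SB * SA) * SB := by simp only [mul_assoc]
    _ ≤ SA * (SA * SB) * SB :=
      mul_le_mul_left (mul_le_mul_right (span_one_mul_span_one_le_swap A B) _) _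
    _ = SA * SA * (SB * SB) := by simp only [mul_assoc]
    _ ≤ SA * SB := mul_le_mul' (span_one_self_mul_self_le A) (span_one_self_mul_self_le B)
  apply le_antisymm
  · have hadjoin : Algebra.adjoin R {A, B} ≤
        (SA * SB).toSubalgebra h1 fun x y hx hy => hmul (mul_mem_mul hx hy) := by
      rw [Algebra.adjoin_le_iff]
      rintro x (rfl | rfl)
      · exact mul_one x ▸ mul_mem_mul hA (subset_span (by simp))
      · exact one_mul x ▸ mul_mem_mul (subset_span (by simp)) hB
    exact hadjoin
  · have hle : ∀ C ∈ ({A, B} : Set (Matrix (Fin 2) (Fin 2) R)),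
        span R {1, C} ≤ Subalgebra.toSubmodule (Algebra.adjoin R {A, B}) := fun C hC =>
      span_le.2 (Set.insert_subset (Subalgebra.one_mem _)
        (Set.singleton_subset_iff.2 (Algebra.subset_adjoin hC)))
    exact (mul_le_mul' (hle A (by simp)) (hle B (by simp))).trans
      (Subalgebra.isIdempotentElem_toSubmodule _).le

def finTwoCoords : Matrix (Fin 2) (Fin 2) R ≃ₗ[R] (Fin 4 → R) where
  toFun m := ![m 0 0, m 0 1, m 1 0, m 1 1]
  invFun f := !![f 0, f 1; f 2, f 3]
  map_add' x y := by funext i; fin_cases i <;> simp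
  map_smul' c x := by funext i; fin_cases i <;> simp
  left_inv m := by ext i j; fin_cases i <;> fin_cases j <;> simp
  right_inv f := by funext i; fin_cases i <;> simp

theorem det_finTwoCoords_one_A_B_AB (A B : Matrix (Fin 2) (Fin 2) R) :
    (Basis.ofEquivFun finTwoCoords).det ![1, A, B, A * B] = (A * B - B * A).det := by
  have hcoords : ((Basis.ofEquivFun finTwoCoords).toMatrix ![1, A, B, A * B])ᵀ =
      !![1, 0, 0, 1;
        A 0 0, A 0 1, A 1 0, A 1 1;
        B 0 0, B 0 1, B 1 0, B 1 1;
        (A * B) 0 0, (A * B) 0 1, (A * B) 1 0, (A * B) 1 1] := by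
    ext i j
    fin_cases i <;> fin_cases j <;> simp [Basis.toMatrix_apply, finTwoCoords]
  rw [Basis.det_apply, ← det_transpose, hcoords]
  simp [det_succ_row_zero, Fin.sum_univ_succ, Fin.succAbove, mul_apply]
  ring

end CommRing

end Matrix

theorem Module.Basis.span_range_eq_top_iff_isUnit_det {R ι M : Type*} [CommRing R] [Fintype ι]
    [DecidableEq ι] [AddCommGroup M] [Module R M] (e : Basis ι R M) (v : ι → M) :
    span R (Set.range v) = ⊤ ↔ IsUnit (e.det v) := by
  rcases subsingleton_or_nontrivial R with hR | hR
  · have := Module.subsingleton R M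
    exact iff_of_true (Subsingleton.elim _ _) (isUnit_of_subsingleton _)
  rw [← e.is_basis_iff_det, and_iff_right_of_imp]
  exact fun h => linearIndependent_of_top_le_span_of_card_eq_finrank h.ge
    (Module.finrank_eq_card_basis e).symm

namespace Matrix

theorem adjoin_pair_eq_top_iff {R : Type*} [CommRing R] (A B : Matrix (Fin 2) (Fin 2) R) :
    Algebra.adjoin R {A, B} = ⊤ ↔ IsUnit (A * B - B * A).det := by
  rw [← Algebra.toSubmodule_eq_top, toSubmodule_adjoin_pair, span_one_mul_span_one,
    ← det_finTwoCoords_one_A_B_AB, ← Basis.span_range_eq_top_iff_isUnit_det]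
  simp only [range_cons, range_empty, Set.singleton_union, Set.union_empty]

theorem det_commutator_map {R S : Type*} [CommRing R] [CommRing S] (f : R →+* S)
    (A B : Matrix (Fin 2) (Fin 2) R) :
    (A.map f * B.map f - B.map f * A.map f).det = f (A * B - B * A).det := by
  rw [← RingHom.mapMatrix_apply, ← RingHom.mapMatrix_apply, ← map_mul, ← map_mul, ← map_sub,
    RingHom.map_det]

theorem isUnit_det_commutator_of_odd {A B : Matrix (Fin 2) (Fin 2) ℤ}
    (hA : ∀ i j, A i j = 0 ∨ A i j = 1) (hB : ∀ i j, B i j = 0 ∨ B i j = 1)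
    (hodd : Odd (A * B - B * A).det) : IsUnit (A * B - B * A).det := by
  obtain ⟨a, b, c, d, rfl⟩ : ∃ a b c d, A = !![a, b; c, d] := ⟨_, _, _, _, A.eta_fin_two⟩
  obtain ⟨e, f, g, h, rfl⟩ : ∃ e f g h, B = !![e, f; g, h] := ⟨_, _, _, _, B.eta_fin_two⟩
  simp only [Fin.forall_fin_two, of_apply, cons_val', cons_val_zero, cons_val_one, empty_val',
    cons_val_fin_one] at hA hB
  obtain ⟨⟨ha, hb⟩, hc, hd⟩ := hA
  obtain ⟨⟨he, hf⟩, hg, hh⟩ := hB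
  simp only [mul_fin_two, det_fin_two, Matrix.sub_apply, of_apply, cons_val', cons_val_zero,
    cons_val_one, empty_val', cons_val_fin_one, Int.isUnit_iff, Int.odd_iff] at hodd ⊢
  rcases ha with rfl | rfl <;> rcases hb with rfl | rfl <;>
    rcases hc with rfl | rfl <;> rcases hd with rfl | rfl <;>
    rcases he with rfl | rfl <;> rcases hf with rfl | rfl <;>
    rcases hg with rfl | rfl <;> rcases hh with rfl | rfl <;>
    omega

end Matrix

theorem stmt_16 (A B : Matrix (Fin 2) (Fin 2) ℤ)
    (hA : ∀ i j, A i j = 0 ∨ A i j = 1) (hB : ∀ i j, B i j = 0 ∨ B i j = 1) :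
    Algebra.adjoin ℤ {A, B} = ⊤ ↔
      Algebra.adjoin (ZMod 2)
        {A.map (fun x => (x : ZMod 2)), B.map (fun x => (x : ZMod 2))} = ⊤ := by
  rw [adjoin_pair_eq_top_iff, adjoin_pair_eq_top_iff, ← Int.coe_castRingHom, det_commutator_map]
  refine ⟨IsUnit.map _, fun h => isUnit_det_commutator_of_odd hA hB ?_⟩
  rwa [Int.coe_castRingHom, isUnit_iff_ne_zero, Ne, ZMod.intCast_eq_zero_iff_even,
    Int.not_even_iff_odd] at h
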